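/- Let X be a set with two distance functions d_a ≤ d_b, and suppose there is ε > 0 such that d_b(x,y) − ε ≤ d_a(x,y) for all x,y ∈ X. Set h = ε/2 and define, on Z = X × [0,h], the function d_Z(z_1, z_2) = min{ d_b(x_1,x_2) + |t_1 − t_2|, (h − t_1) + (h − t_2) + d_a(x_1,x_2) } for z_i = (x_i, t_i). Then (Z, d_Z) is a metric space. -/
import Mathlib


/-- The metric on `Z = X × [0,h]` built from two distances `d_a ≤ d_b` on `X`:
`d_Z(z₁,z₂) = min{ d_b(x₁,x₂)+|t₁−t₂|, (h−t₁)+(h−t₂)+d_a(x₁,x₂) }`. -/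
noncomputable def dZpair {X : Type*} (da db : X → X → ℝ) (h : ℝ) :
    X × ℝ → X × ℝ → ℝ := fun z w =>
  min (db z.1 w.1 + |z.2 - w.2|) ((h - z.2) + (h - w.2) + da z.1 w.1)

/-- With `d_a ≤ d_b ≤ d_a + ε` and `h = ε/2`, the function `d_Z` on
`X × [0,h]` is a metric: nonnegative, definite, symmetric, and satisfies the
triangle inequality. -/
theorem dZpair_is_metric
    {X : Type*} (da db : X → X → ℝ) (ε : ℝ) (hε : 0 < ε)
    (hanonneg : ∀ x y, 0 ≤ da x y) (haself : ∀ x, da x x = 0)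
    (hadef : ∀ x y, da x y = 0 → x = y)
    (hasymm : ∀ x y, da x y = da y x)
    (hatri : ∀ x y z, da x z ≤ da x y + da y z)
    (hbnonneg : ∀ x y, 0 ≤ db x y) (hbself : ∀ x, db x x = 0)
    (hbdef : ∀ x y, db x y = 0 → x = y)
    (hbsymm : ∀ x y, db x y = db y x)
    (hbtri : ∀ x y z, db x z ≤ db x y + db y z)
    (hle : ∀ x y, da x y ≤ db x y)
    (hband : ∀ x y, db x y - ε ≤ da x y) :
    (∀ (x₁ x₂ : X) (t₁ t₂ : ℝ), t₁ ∈ Set.Icc 0 (ε / 2) → t₂ ∈ Set.Icc 0 (ε / 2) →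
      0 ≤ dZpair da db (ε / 2) (x₁, t₁) (x₂, t₂))
    ∧ (∀ (x₁ x₂ : X) (t₁ t₂ : ℝ), t₁ ∈ Set.Icc 0 (ε / 2) → t₂ ∈ Set.Icc 0 (ε / 2) →
      (dZpair da db (ε / 2) (x₁, t₁) (x₂, t₂) = 0 ↔ x₁ = x₂ ∧ t₁ = t₂))
    ∧ (∀ (x₁ x₂ : X) (t₁ t₂ : ℝ),
      dZpair da db (ε / 2) (x₁, t₁) (x₂, t₂) = dZpair da db (ε / 2) (x₂, t₂) (x₁, t₁))
    ∧ (∀ (x₁ x₂ x₃ : X) (t₁ t₂ t₃ : ℝ), t₁ ∈ Set.Icc 0 (ε / 2) →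
      t₂ ∈ Set.Icc 0 (ε / 2) → t₃ ∈ Set.Icc 0 (ε / 2) →
      dZpair da db (ε / 2) (x₁, t₁) (x₃, t₃) ≤
        dZpair da db (ε / 2) (x₁, t₁) (x₂, t₂) +
          dZpair da db (ε / 2) (x₂, t₂) (x₃, t₃)) := by
  refine ⟨?_, ?_, ?_, ?_⟩
  · intro x₁ x₂ t₁ t₂ h₁ h₂
    simp only [dZpair, le_min_iff]
    constructor
    · exact add_nonneg (hbnonneg _ _) (abs_nonneg _)
    · have := h₁.2; have := h₂.2
      have := hanonneg x₁ x₂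
      linarith
  · intro x₁ x₂ t₁ t₂ h₁ h₂
    constructor
    · intro h0
      simp only [dZpair] at h0
      rcases min_cases (db x₁ x₂ + |t₁ - t₂|) ((ε / 2 - t₁) + (ε / 2 - t₂) + da x₁ x₂)
        with ⟨he, _⟩ | ⟨he, _⟩
      · rw [he] at h0
        have hb0 := hbnonneg x₁ x₂
        have habs : (0:ℝ) ≤ |t₁ - t₂| := abs_nonneg _
        have hb : db x₁ x₂ = 0 := by linarith
        have ht : |t₁ - t₂| = 0 := by linarith
        exact ⟨hbdef _ _ hb, by have := abs_eq_zero.mp ht; linarith⟩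
      · rw [he] at h0
        have h1 := h₁.2; have h2 := h₂.2
        have ha0 := hanonneg x₁ x₂
        have ha : da x₁ x₂ = 0 := by linarith
        have ht1 : t₁ = ε / 2 := by linarith
        have ht2 : t₂ = ε / 2 := by linarith
        exact ⟨hadef _ _ ha, by rw [ht1, ht2]⟩
    · rintro ⟨rfl, rfl⟩
      simp only [dZpair, hbself, sub_self, abs_zero, add_zero]
      have := h₁.2
      have : (0:ℝ) ≤ (ε / 2 - t₁) + (ε / 2 - t₁) + da x₁ x₁ := by
        have := hanonneg x₁ x₁; linarith
      simp [min_eq_left this]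
  · intro x₁ x₂ t₁ t₂
    simp only [dZpair, hbsymm x₁ x₂, hasymm x₁ x₂, abs_sub_comm t₁ t₂]
    ring_nf
  · intro x₁ x₂ x₃ t₁ t₂ t₃ h₁ h₂ h₃
    simp only [dZpair]
    have habs13 : |t₁ - t₃| ≤ |t₁ - t₂| + |t₂ - t₃| := abs_sub_le _ _ _
    have habs12 : t₂ - t₁ ≤ |t₁ - t₂| := by
      rw [abs_sub_comm]; exact le_abs_self _
    have habs23 : t₂ - t₃ ≤ |t₂ - t₃| := le_abs_self _
    have hta := hatri x₁ x₂ x₃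
    have htb := hbtri x₁ x₂ x₃
    have hle12 := hle x₁ x₂
    have hle23 := hle x₂ x₃
    have h2l := h₂.1; have h2u := h₂.2
    rcases min_cases (db x₁ x₂ + |t₁ - t₂|) ((ε / 2 - t₁) + (ε / 2 - t₂) + da x₁ x₂)
      with ⟨he1, _⟩ | ⟨he1, _⟩ <;>
    rcases min_cases (db x₂ x₃ + |t₂ - t₃|) ((ε / 2 - t₂) + (ε / 2 - t₃) + da x₂ x₃)
      with ⟨he2, _⟩ | ⟨he2, _⟩ <;> rw [he1, he2]
    · refine le_trans (min_le_left _ _) ?_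
      linarith
    · refine le_trans (min_le_right _ _) ?_
      linarith
    · refine le_trans (min_le_right _ _) ?_
      linarith
    · refine le_trans (min_le_right _ _) ?_
      linarith
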